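/- arXiv:1303.4785 — 2 statements merged into one kernel-verified Lean document; each statement's English description precedes it below -/
import Mathlib

section
/- Einstein coaddition admits the explicit representation u ⊞ v = 2 ⊙ ((γ_u·u + γ_v·v)/(γ_u + γ_v)) for all u, v in the c-ball V_c; in particular, Einstein coaddition is commutative: u ⊞ v = v ⊞ u. -/
open scoped RealInnerProductSpace

noncomputable def gamma {V : Type*} [NormedAddCommGroup V] [InnerProductSpace ℝ V]
    (c : ℝ) (u : V) : ℝ :=
  1 / Real.sqrt (1 - ‖u‖ ^ 2 / c ^ 2)

noncomputable def eAdd {V : Type*} [NormedAddCommGroup V] [InnerProductSpace ℝ V]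
    (c : ℝ) (u v : V) : V :=
  (1 / (1 + ⟪u, v⟫ / c ^ 2)) •
    (u + (1 / gamma c u) • v +
      ((1 / c ^ 2) * (gamma c u / (1 + gamma c u)) * ⟪u, v⟫) • u)

noncomputable def eGyr {V : Type*} [NormedAddCommGroup V] [InnerProductSpace ℝ V]
    (c : ℝ) (u v w : V) : V :=
  eAdd c (-(eAdd c u v)) (eAdd c u (eAdd c v w))

noncomputable def eCoadd {V : Type*} [NormedAddCommGroup V] [InnerProductSpace ℝ V]
    (c : ℝ) (u v : V) : V :=
  eAdd c u (eGyr c u (-v) v)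

noncomputable def mAdd {V : Type*} [NormedAddCommGroup V] [InnerProductSpace ℝ V]
    (s : ℝ) (u v : V) : V :=
  (1 / (1 + (2 / s ^ 2) * ⟪u, v⟫ + (1 / s ^ 4) * ‖u‖ ^ 2 * ‖v‖ ^ 2)) •
    ((1 + (2 / s ^ 2) * ⟪u, v⟫ + (1 / s ^ 2) * ‖v‖ ^ 2) • u +
      (1 - (1 / s ^ 2) * ‖u‖ ^ 2) • v)

noncomputable def mGyr {V : Type*} [NormedAddCommGroup V] [InnerProductSpace ℝ V]
    (s : ℝ) (u v w : V) : V :=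
  mAdd s (-(mAdd s u v)) (mAdd s u (mAdd s v w))

noncomputable def mCoadd {V : Type*} [NormedAddCommGroup V] [InnerProductSpace ℝ V]
    (s : ℝ) (u v : V) : V :=
  mAdd s u (mGyr s u (-v) v)

noncomputable def artanh (x : ℝ) : ℝ :=
  (1 / 2) * Real.log ((1 + x) / (1 - x))

open Classical in
noncomputable def sMul {V : Type*} [NormedAddCommGroup V] [InnerProductSpace ℝ V]
    (c : ℝ) (r : ℝ) (v : V) : V :=
  if v = 0 then 0 else (c * Real.tanh (r * artanh (‖v‖ / c)) / ‖v‖) • v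

variable {V : Type*} [NormedAddCommGroup V] [InnerProductSpace ℝ V]

/-! Unfolding the gyration with the left cancellation `⊖v ⊕ v = 0` gives
`gyr[u, ⊖v] v = (⊖u ⊕ v) ⊕ u`, so everything stays in the span of `u` and `v`. Since
`γ_{x ⊕ y} = γ_x γ_y (1 + ⟪x, y⟫ / c²)`, both Einstein additions can be evaluated in closed form,
and `u ⊞ v` comes out as a multiple of `γ_u u + γ_v v`. On the other side `2 ⊙ z = 2 z / (1 + ‖z‖² / c²)`
by the doubling formula for `tanh`, and for the gyromidpoint `z = (γ_u u + γ_v v) / (γ_u + γ_v)`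
the two multiples agree. The result is symmetric in `u` and `v`, which gives commutativity. -/

section

variable {c : ℝ}

lemma one_sub_sq_div_sq_pos {x : ℝ} (hx₀ : 0 ≤ x) (hx : x < c) : 0 < 1 - x ^ 2 / c ^ 2 := by
  have hc : 0 < c := hx₀.trans_lt hx
  rw [sub_pos, div_lt_one (by positivity)]
  gcongr

lemma gamma_pos {u : V} (hu : ‖u‖ < c) : 0 < gamma c u := by
  have := one_sub_sq_div_sq_pos (norm_nonneg u) hu
  unfold gamma
  positivity

lemma one_le_gamma {u : V} (hu : ‖u‖ < c) : 1 ≤ gamma c u := by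
  have h := one_sub_sq_div_sq_pos (norm_nonneg u) hu
  have hsqrt : Real.sqrt (1 - ‖u‖ ^ 2 / c ^ 2) ≤ 1 :=
    Real.sqrt_le_one.mpr (by linarith [div_nonneg (sq_nonneg ‖u‖) (sq_nonneg c)])
  unfold gamma
  rw [le_div_iff₀ (Real.sqrt_pos.mpr h), one_mul]
  exact hsqrt

lemma norm_sq_eq_of_gamma {u : V} (hu : ‖u‖ < c) :
    ‖u‖ ^ 2 = c ^ 2 * (1 - 1 / gamma c u ^ 2) := by
  have h := one_sub_sq_div_sq_pos (norm_nonneg u) hu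
  have hc : c ≠ 0 := ((norm_nonneg u).trans_lt hu).ne'
  rw [gamma, div_pow, Real.sq_sqrt h.le]
  field_simp
  ring

lemma gamma_neg (c : ℝ) (u : V) : gamma c (-u) = gamma c u := by
  simp [gamma]

lemma sq_add_inner_pos {u v : V} (hu : ‖u‖ < c) (hv : ‖v‖ < c) : 0 < c ^ 2 + ⟪u, v⟫ := by
  have h : -⟪u, v⟫ ≤ ‖u‖ * ‖v‖ := neg_le.mp (abs_le.mp (abs_real_inner_le_norm u v)).1
  nlinarith [mul_lt_mul'' hu hv (norm_nonneg u) (norm_nonneg v)]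

lemma one_add_inner_div_pos {u v : V} (hu : ‖u‖ < c) (hv : ‖v‖ < c) :
    0 < 1 + ⟪u, v⟫ / c ^ 2 := by
  have hc : 0 < c := (norm_nonneg u).trans_lt hu
  rw [one_add_div (by positivity)]
  exact div_pos (sq_add_inner_pos hu hv) (by positivity)

lemma eAdd_zero (c : ℝ) (u : V) : eAdd c u 0 = u := by
  simp [eAdd]

lemma neg_eAdd_neg (c : ℝ) (u v : V) : eAdd c (-u) (-v) = -eAdd c u v := by
  simp only [eAdd, gamma_neg, inner_neg_neg, neg_add, ← smul_neg]

lemma eAdd_neg_self {v : V} (hv : ‖v‖ < c) : eAdd c (-v) v = 0 := by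
  have hb := gamma_pos hv
  have hc : c ≠ 0 := ((norm_nonneg v).trans_lt hv).ne'
  simp only [eAdd, gamma_neg, inner_neg_left, real_inner_self_eq_norm_sq,
    norm_sq_eq_of_gamma hv]
  match_scalars
  field_simp
  ring

lemma one_sub_norm_sq_eAdd {u v : V} (hu : ‖u‖ < c) (hv : ‖v‖ < c) :
    1 - ‖eAdd c u v‖ ^ 2 / c ^ 2 =
      (1 / (gamma c u * gamma c v * (1 + ⟪u, v⟫ / c ^ 2))) ^ 2 := by
  have ha := gamma_pos hu
  have hc : c ≠ 0 := ((norm_nonneg u).trans_lt hu).ne'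
  have hcp := sq_add_inner_pos hu hv
  rw [← real_inner_self_eq_norm_sq, eAdd]
  simp only [inner_add_left, inner_add_right, real_inner_smul_left, real_inner_smul_right,
    real_inner_self_eq_norm_sq u, real_inner_self_eq_norm_sq v, real_inner_comm u v,
    norm_sq_eq_of_gamma hu, norm_sq_eq_of_gamma hv]
  field_simp
  ring

lemma gamma_eAdd {u v : V} (hu : ‖u‖ < c) (hv : ‖v‖ < c) :
    gamma c (eAdd c u v) = gamma c u * gamma c v * (1 + ⟪u, v⟫ / c ^ 2) := by
  have := one_add_inner_div_pos hu hv
  have := gamma_pos hu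
  have := gamma_pos hv
  rw [gamma, one_sub_norm_sq_eAdd hu hv, Real.sqrt_sq (by positivity), one_div_one_div]

lemma one_sub_inner_eAdd_self {u v : V} (hu : ‖u‖ < c) (hv : ‖v‖ < c) :
    1 - ⟪eAdd c u v, u⟫ / c ^ 2 = 1 / (gamma c u ^ 2 * (1 + ⟪u, v⟫ / c ^ 2)) := by
  have ha := gamma_pos hu
  have hc : c ≠ 0 := ((norm_nonneg u).trans_lt hu).ne'
  have hcp := sq_add_inner_pos hu hv
  simp only [eAdd, inner_add_left, real_inner_smul_left, real_inner_self_eq_norm_sq,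
    real_inner_comm u v, norm_sq_eq_of_gamma hu]
  field_simp
  ring

lemma eGyr_neg_self_eq_eAdd {v : V} (hv : ‖v‖ < c) (u : V) :
    eGyr c u (-v) v = eAdd c (eAdd c (-u) v) u := by
  rw [eGyr, eAdd_neg_self hv, eAdd_zero, ← neg_eAdd_neg, neg_neg]

lemma eGyr_neg_self_eq_smul_add_smul {u v : V} (hu : ‖u‖ < c) (hv : ‖v‖ < c) :
    eGyr c u (-v) v =
      (gamma c u / gamma c v - gamma c u * (gamma c u + gamma c v) *
          (1 + gamma c u - gamma c u * (⟪u, v⟫ / c ^ 2)) /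
          ((1 + gamma c u) * (1 + gamma c u * gamma c v * (1 - ⟪u, v⟫ / c ^ 2)))) • u +
        ((gamma c u + gamma c v) / (1 + gamma c u * gamma c v * (1 - ⟪u, v⟫ / c ^ 2))) • v := by
  have hnu : ‖-u‖ < c := by rwa [norm_neg]
  have ha := gamma_pos hu
  have hb := gamma_pos hv
  have hc : c ≠ 0 := ((norm_nonneg u).trans_lt hu).ne'
  have hγw := gamma_eAdd hnu hv
  have hwu := one_sub_inner_eAdd_self hnu hv
  have hm := one_add_inner_div_pos hnu hv
  simp only [gamma_neg, inner_neg_left, inner_neg_right, neg_div, sub_neg_eq_add,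
    ← sub_eq_add_neg] at hγw hwu hm
  rw [eGyr_neg_self_eq_eAdd hv]
  set w := eAdd c (-u) v with hw_def
  have hwu' : ⟪w, u⟫ = c ^ 2 * (1 / (gamma c u ^ 2 * (1 - ⟪u, v⟫ / c ^ 2)) - 1) := by
    rw [← hwu]
    field_simp
    ring
  simp only [eAdd, hγw, hwu']
  rw [hw_def]
  simp only [eAdd, gamma_neg, inner_neg_left]
  obtain ⟨s, hs⟩ : ∃ s, ⟪u, v⟫ = c ^ 2 * s := ⟨⟪u, v⟫ / c ^ 2, by field_simp⟩
  simp only [hs, mul_div_cancel_left₀ _ (pow_ne_zero 2 hc), neg_div, ← sub_eq_add_neg] at hm ⊢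
  have hm' := hm.ne'
  match_scalars
  · field_simp
    ring
  · field_simp
    ring

lemma eCoadd_eq_smul {u v : V} (hu : ‖u‖ < c) (hv : ‖v‖ < c) :
    eCoadd c u v =
      ((gamma c u + gamma c v) /
        (gamma c u ^ 2 + gamma c v ^ 2 - 1 + gamma c u * gamma c v * (1 + ⟪u, v⟫ / c ^ 2))) •
        (gamma c u • u + gamma c v • v) := by
  have ha := gamma_pos hu
  have hb := gamma_pos hv
  have hc : c ≠ 0 := ((norm_nonneg u).trans_lt hu).ne'
  have hp := one_add_inner_div_pos hu hv
  have hm := one_add_inner_div_pos (u := u) (v := -v) hu (by rwa [norm_neg])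
  obtain ⟨s, hs⟩ : ∃ s, ⟪u, v⟫ = c ^ 2 * s := ⟨⟪u, v⟫ / c ^ 2, by field_simp⟩
  simp only [inner_neg_right, hs, mul_div_cancel_left₀ _ (pow_ne_zero 2 hc), neg_div,
    ← sub_eq_add_neg] at hp hm
  have hK : 0 < gamma c u ^ 2 + gamma c v ^ 2 - 1 + gamma c u * gamma c v * (1 + s) := by
    nlinarith [mul_pos (mul_pos ha hb) hp, one_le_gamma hv]
  have hq : ⟪u, eGyr c u (-v) v⟫ = c ^ 2 * ((gamma c u ^ 2 + gamma c v ^ 2 - 1 +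
      gamma c u * gamma c v * (1 + s)) /
        (gamma c u * gamma c v * (1 + gamma c u * gamma c v * (1 - s))) - 1) := by
    rw [eGyr_neg_self_eq_smul_add_smul hu hv]
    simp only [inner_add_right, real_inner_smul_right, real_inner_self_eq_norm_sq,
      norm_sq_eq_of_gamma hu, hs, mul_div_cancel_left₀ _ (pow_ne_zero 2 hc)]
    field_simp
    ring
  rw [eCoadd]
  unfold eAdd
  rw [hq, eGyr_neg_self_eq_smul_add_smul hu hv]
  simp only [hs, mul_div_cancel_left₀ _ (pow_ne_zero 2 hc), add_sub_cancel]
  have hK' := hK.ne'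
  match_scalars
  · field_simp
    ring
  · field_simp

lemma tanh_two_mul_artanh {x : ℝ} (hx₁ : -1 < x) (hx₂ : x < 1) :
    Real.tanh (2 * artanh x) = 2 * x / (1 + x ^ 2) := by
  have h₁ : 0 < 1 + x := by linarith
  have h₂ : 0 < 1 - x := by linarith
  have hy : 0 < (1 + x) / (1 - x) := div_pos h₁ h₂
  rw [artanh, ← mul_assoc, show (2 : ℝ) * (1 / 2) = 1 by norm_num, one_mul,
    Real.tanh_eq_sinh_div_cosh, Real.sinh_eq, Real.cosh_eq, Real.exp_neg, Real.exp_log hy]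
  field_simp
  ring

lemma sMul_two {z : V} (hz : ‖z‖ < c) : sMul c 2 z = (2 / (1 + ‖z‖ ^ 2 / c ^ 2)) • z := by
  by_cases h : z = 0
  · simp [sMul, h]
  have hc : 0 < c := (norm_nonneg z).trans_lt hz
  have hn : 0 < ‖z‖ := norm_pos_iff.mpr h
  rw [sMul, if_neg h, tanh_two_mul_artanh (by linarith [div_nonneg hn.le hc.le])
    ((div_lt_one hc).mpr hz)]
  congr 1
  field_simp

noncomputable def eMidpoint (c : ℝ) (u v : V) : V :=
  (1 / (gamma c u + gamma c v)) • (gamma c u • u + gamma c v • v)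

lemma eMidpoint_comm (c : ℝ) (u v : V) : eMidpoint c u v = eMidpoint c v u := by
  unfold eMidpoint
  rw [add_comm (gamma c u), add_comm (gamma c u • u)]

lemma norm_eMidpoint_lt {u v : V} (hu : ‖u‖ < c) (hv : ‖v‖ < c) : ‖eMidpoint c u v‖ < c := by
  have ha := gamma_pos hu
  have hb := gamma_pos hv
  have hmid : eMidpoint c u v =
      (gamma c u / (gamma c u + gamma c v)) • u + (gamma c v / (gamma c u + gamma c v)) • v := by
    simp only [eMidpoint, smul_add, smul_smul, one_div_mul_eq_div]
  rw [hmid, ← mem_ball_zero_iff]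
  exact convex_ball (0 : V) c (mem_ball_zero_iff.mpr hu) (mem_ball_zero_iff.mpr hv)
    (div_pos ha (add_pos ha hb)).le (div_pos hb (add_pos ha hb)).le (by field_simp)

lemma one_add_norm_sq_eMidpoint {u v : V} (hu : ‖u‖ < c) (hv : ‖v‖ < c) :
    1 + ‖eMidpoint c u v‖ ^ 2 / c ^ 2 =
      2 * (gamma c u ^ 2 + gamma c v ^ 2 - 1 + gamma c u * gamma c v * (1 + ⟪u, v⟫ / c ^ 2)) /
        (gamma c u + gamma c v) ^ 2 := by
  have ha := gamma_pos hu
  have hb := gamma_pos hv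
  have hc : c ≠ 0 := ((norm_nonneg u).trans_lt hu).ne'
  rw [← real_inner_self_eq_norm_sq, eMidpoint]
  simp only [inner_add_left, inner_add_right, real_inner_smul_left, real_inner_smul_right,
    real_inner_self_eq_norm_sq u, real_inner_self_eq_norm_sq v, real_inner_comm u v,
    norm_sq_eq_of_gamma hu, norm_sq_eq_of_gamma hv]
  field_simp
  ring

lemma eCoadd_eq_sMul_two_eMidpoint {u v : V} (hu : ‖u‖ < c) (hv : ‖v‖ < c) :
    eCoadd c u v = sMul c 2 (eMidpoint c u v) := by
  have ha := gamma_pos hu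
  have hb := gamma_pos hv
  have hK : 0 < gamma c u ^ 2 + gamma c v ^ 2 - 1 +
      gamma c u * gamma c v * (1 + ⟪u, v⟫ / c ^ 2) := by
    nlinarith [mul_pos (mul_pos ha hb) (one_add_inner_div_pos hu hv), one_le_gamma hv]
  rw [eCoadd_eq_smul hu hv, sMul_two (norm_eMidpoint_lt hu hv), one_add_norm_sq_eMidpoint hu hv,
    eMidpoint, smul_smul]
  congr 1
  field_simp

end

theorem einstein_coaddition_formula_general (c : ℝ) (u v : V)
    (hu : ‖u‖ < c) (hv : ‖v‖ < c) :
    eCoadd c u v =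
      sMul c 2 ((1 / (gamma c u + gamma c v)) • (gamma c u • u + gamma c v • v)) ∧
    eCoadd c u v = eCoadd c v u :=
  ⟨eCoadd_eq_sMul_two_eMidpoint hu hv, by
    rw [eCoadd_eq_sMul_two_eMidpoint hu hv, eCoadd_eq_sMul_two_eMidpoint hv hu, eMidpoint_comm]⟩

theorem einstein_coaddition_formula (c : ℝ) (hc : 0 < c) (u v : V)
    (hu : ‖u‖ < c) (hv : ‖v‖ < c) :
    eCoadd c u v =
      sMul c 2 ((1 / (gamma c u + gamma c v)) • (gamma c u • u + gamma c v • v)) ∧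
    eCoadd c u v = eCoadd c v u :=
  einstein_coaddition_formula_general c u v hu hv
end

section
/- (Supporting chord theorem) Let C, D be two distinct points of the s-ball V_s and let L(t) = C ⊕_M ((⊖_M C ⊕_M D) ⊙ t), t ∈ ℝ, be the Möbius gyroline through C and D. Then the cogyrotranslation t ↦ C ⊞_M L(t) of the gyroline by C traces the supporting chord of the gyroline: (i) C ⊞_M L(0) = C ⊞_M C = 2 ⊙ C and C ⊞_M L(1) = C ⊞_M D; (ii) for every t ∈ ℝ there exists λ ∈ ℝ with C ⊞_M L(t) = 2 ⊙ C + λ·((C ⊞_M D) − 2 ⊙ C); and (iii) the point 2 ⊙ D also lies on this Euclidean line, i.e., there exists λ' ∈ ℝ with 2 ⊙ D = 2 ⊙ C + λ'·((C ⊞_M D) − 2 ⊙ C). -/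
/-
Put `v = ⊖C ⊕ D`, so that `D = C ⊕ v` by left cancellation. Since `t ⊙ v` is a real multiple
`k v` of `v`, the gyroline is `L(t) = C ⊕ k v`. Unfolding the gyration gives
`C ⊞ (C ⊕ y) = C ⊕ (y ⊕ C)`, and a direct computation in the plane of `C` and `y` gives
`C ⊕ (y ⊕ C) = ((2s² + 2⟨C,y⟩) C + (s² - ‖C‖²) y) / (s² + ‖C‖² + 2⟨C,y⟩)`.
So in the frame `(C, v)` the coordinates `(p, q)` of every `C ⊞ L(t)`, and also those of
`2 ⊙ C` and of `2 ⊙ D`, satisfy the one linear equation `(s² + ‖C‖²) p + 2⟨C,v⟩ q = 2s²`.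
These points therefore lie on a single Euclidean line, and `C ⊞ D` (with `q ≠ 0`) spans it
from `2 ⊙ C`.
-/
open scoped RealInnerProductSpace

variable {V : Type*} [NormedAddCommGroup V] [InnerProductSpace ℝ V]

lemma tanh_artanh {x : ℝ} (hx : x ∈ Set.Ioo (-1) 1) : Real.tanh (artanh x) = x := by
  rw [artanh, ← Real.artanh_eq_half_log (Set.Ioo_subset_Icc_self hx), Real.tanh_artanh hx]

lemma Real.tanh_two_mul (x : ℝ) :
    Real.tanh (2 * x) = 2 * Real.tanh x / (1 + Real.tanh x ^ 2) := by
  have := (Real.cosh_pos x).ne'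
  rw [Real.tanh_eq_sinh_div_cosh, Real.tanh_eq_sinh_div_cosh, Real.sinh_two_mul,
    Real.cosh_two_mul]
  field_simp

section ScalarMultiplication

variable {s : ℝ}

lemma sMul_zero_left (s : ℝ) (v : V) : sMul s 0 v = 0 := by
  unfold sMul
  split_ifs <;> simp

lemma exists_sMul_eq_smul (s t : ℝ) (v : V) : ∃ k : ℝ, sMul s t v = k • v := by
  unfold sMul
  split_ifs with h
  · exact ⟨0, by simp [h]⟩
  · exact ⟨_, rfl⟩

lemma norm_sMul_lt (hs : 0 < s) (t : ℝ) (v : V) : ‖sMul s t v‖ < s := by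
  unfold sMul
  split_ifs with h
  · simpa using hs
  · have hv : 0 < ‖v‖ := norm_pos_iff.mpr h
    rw [norm_smul, Real.norm_eq_abs, abs_div, abs_mul, abs_of_pos hs, abs_of_pos hv,
      div_mul_cancel₀ _ hv.ne']
    simpa using mul_lt_mul_of_pos_left (Real.abs_tanh_lt_one (t * artanh (‖v‖ / s))) hs

lemma div_mem_Ioo_of_lt {x : ℝ} (hx : 0 ≤ x) (hxs : x < s) : x / s ∈ Set.Ioo (-1) 1 :=
  ⟨by linarith [div_nonneg hx (hx.trans hxs.le)], (div_lt_one (hx.trans_lt hxs)).mpr hxs⟩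

lemma sMul_one (hs : 0 < s) {v : V} (hv : ‖v‖ < s) : sMul s 1 v = v := by
  unfold sMul
  split_ifs with h
  · exact h.symm
  · have hv0 : ‖v‖ ≠ 0 := norm_ne_zero_iff.mpr h
    rw [one_mul, tanh_artanh (div_mem_Ioo_of_lt (norm_nonneg v) hv), mul_div_cancel₀ _ hs.ne',
      div_self hv0, one_smul]

lemma sMul_two_s18 (hs : 0 < s) {v : V} (hv : ‖v‖ < s) :
    sMul s 2 v = (2 * s ^ 2 / (s ^ 2 + ‖v‖ ^ 2)) • v := by
  unfold sMul
  split_ifs with h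
  · rw [h, smul_zero]
  · have hv0 : ‖v‖ ≠ 0 := norm_ne_zero_iff.mpr h
    rw [Real.tanh_two_mul, tanh_artanh (div_mem_Ioo_of_lt (norm_nonneg v) hv)]
    congr 1
    field_simp

end ScalarMultiplication

section MobiusAddition

variable {s : ℝ}

lemma mAdd_zero_right (s : ℝ) (u : V) : mAdd s u 0 = u := by simp [mAdd]

lemma neg_mAdd_neg (s : ℝ) (u v : V) : mAdd s (-u) (-v) = -mAdd s u v := by
  simp only [mAdd, inner_neg_neg, norm_neg, smul_neg, ← neg_add]

lemma mAdd_neg_self (s : ℝ) (v : V) : mAdd s (-v) v = 0 := by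
  simp only [mAdd, inner_neg_left, norm_neg, real_inner_self_eq_norm_sq]
  match_scalars
  ring

lemma norm_smul_add_smul_sq (a b : ℝ) (u v : V) :
    ‖a • u + b • v‖ ^ 2 = a ^ 2 * ‖u‖ ^ 2 + 2 * a * b * ⟪u, v⟫ + b ^ 2 * ‖v‖ ^ 2 := by
  rw [norm_add_sq_real, norm_smul, norm_smul, real_inner_smul_left, real_inner_smul_right,
    Real.norm_eq_abs, Real.norm_eq_abs, mul_pow, mul_pow, sq_abs, sq_abs]
  ring

lemma mAdd_eq (hs : s ≠ 0) (u v : V) :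
    mAdd s u v =
      (s ^ 2 * (s ^ 2 + 2 * ⟪u, v⟫ + ‖v‖ ^ 2) /
          (s ^ 4 + 2 * ⟪u, v⟫ * s ^ 2 + ‖u‖ ^ 2 * ‖v‖ ^ 2)) • u +
        (s ^ 2 * (s ^ 2 - ‖u‖ ^ 2) / (s ^ 4 + 2 * ⟪u, v⟫ * s ^ 2 + ‖u‖ ^ 2 * ‖v‖ ^ 2)) • v := by
  have hden : 1 + 2 / s ^ 2 * ⟪u, v⟫ + 1 / s ^ 4 * ‖u‖ ^ 2 * ‖v‖ ^ 2 =
      (s ^ 4 + 2 * ⟪u, v⟫ * s ^ 2 + ‖u‖ ^ 2 * ‖v‖ ^ 2) / s ^ 4 := by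
    field_simp
  rw [mAdd, hden, one_div_div]
  match_scalars <;> field_simp

lemma mAdd_denom_pos (hs : 0 < s) {u v : V} (hu : ‖u‖ < s) (hv : ‖v‖ < s) :
    0 < s ^ 4 + 2 * ⟪u, v⟫ * s ^ 2 + ‖u‖ ^ 2 * ‖v‖ ^ 2 := by
  have hinner : -(‖u‖ * ‖v‖) ≤ ⟪u, v⟫ := neg_le_of_abs_le (abs_real_inner_le_norm u v)
  have hprod : ‖u‖ * ‖v‖ < s ^ 2 := by nlinarith [norm_nonneg u, norm_nonneg v]
  nlinarith [mul_le_mul_of_nonneg_right hinner (sq_nonneg s), sq_pos_of_pos (sub_pos.mpr hprod)]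

lemma sq_sub_norm_mAdd_sq (hs : 0 < s) {u v : V} (hu : ‖u‖ < s) (hv : ‖v‖ < s) :
    s ^ 2 - ‖mAdd s u v‖ ^ 2 = s ^ 2 * (s ^ 2 - ‖u‖ ^ 2) * (s ^ 2 - ‖v‖ ^ 2) /
      (s ^ 4 + 2 * ⟪u, v⟫ * s ^ 2 + ‖u‖ ^ 2 * ‖v‖ ^ 2) := by
  have hden := (mAdd_denom_pos hs hu hv).ne'
  rw [mAdd_eq hs.ne', norm_smul_add_smul_sq]
  set Δ := s ^ 4 + 2 * ⟪u, v⟫ * s ^ 2 + ‖u‖ ^ 2 * ‖v‖ ^ 2 with hΔ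
  field_simp
  rw [hΔ]
  ring

lemma norm_mAdd_lt (hs : 0 < s) {u v : V} (hu : ‖u‖ < s) (hv : ‖v‖ < s) :
    ‖mAdd s u v‖ < s := by
  have hsq := sq_sub_norm_mAdd_sq hs hu hv
  have hu2 : 0 < s ^ 2 - ‖u‖ ^ 2 := by nlinarith [norm_nonneg u]
  have hv2 : 0 < s ^ 2 - ‖v‖ ^ 2 := by nlinarith [norm_nonneg v]
  have : 0 < s ^ 2 - ‖mAdd s u v‖ ^ 2 := by
    rw [hsq]
    have := mAdd_denom_pos hs hu hv
    positivity
  exact lt_of_pow_lt_pow_left₀ 2 hs.le (by linarith)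

lemma mAdd_neg_cancel_left (hs : 0 < s) {u v : V} (hu : ‖u‖ < s) (hv : ‖v‖ < s) :
    mAdd s u (mAdd s (-u) v) = v := by
  have hu' : ‖-u‖ < s := by rwa [norm_neg]
  have hΔ := mAdd_denom_pos hs hu' hv
  have hnorm := sq_sub_norm_mAdd_sq hs hu' hv
  have hw := mAdd_eq hs.ne' (-u) v
  rw [inner_neg_left, norm_neg] at hΔ hnorm hw
  rw [smul_neg, ← neg_smul] at hw
  set w := mAdd s (-u) v
  set Δ := s ^ 4 + 2 * -⟪u, v⟫ * s ^ 2 + ‖u‖ ^ 2 * ‖v‖ ^ 2 with hΔdef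
  have hinner : ⟪u, w⟫ = (s ^ 2 * (s ^ 2 - ‖u‖ ^ 2) * ⟪u, v⟫ -
      s ^ 2 * (s ^ 2 - 2 * ⟪u, v⟫ + ‖v‖ ^ 2) * ‖u‖ ^ 2) / Δ := by
    rw [hw, inner_add_right, real_inner_smul_right, real_inner_smul_right,
      real_inner_self_eq_norm_sq]
    field_simp
    ring
  have hw2 : ‖w‖ ^ 2 = s ^ 2 - s ^ 2 * (s ^ 2 - ‖u‖ ^ 2) * (s ^ 2 - ‖v‖ ^ 2) / Δ := by
    linarith
  have hu2 : 0 < s ^ 2 - ‖u‖ ^ 2 := by nlinarith [norm_nonneg u]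
  have hΔ' : s ^ 4 + 2 * ⟪u, w⟫ * s ^ 2 + ‖u‖ ^ 2 * ‖w‖ ^ 2 =
      s ^ 4 * (s ^ 2 - ‖u‖ ^ 2) ^ 2 / Δ := by
    rw [hinner, hw2]
    field_simp
    rw [hΔdef]
    ring
  rw [mAdd_eq hs.ne' u w, hΔ', hinner, hw2, hw]
  match_scalars
  · field_simp
    ring
  · field_simp

lemma mCoadd_eq_mAdd_mAdd (s : ℝ) (u x : V) :
    mCoadd s u x = mAdd s u (mAdd s (mAdd s (-u) x) u) := by
  rw [mCoadd, mGyr, mAdd_neg_self, mAdd_zero_right, ← neg_mAdd_neg, neg_neg]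

lemma neg_mAdd_cancel_left (hs : 0 < s) {u v : V} (hu : ‖u‖ < s) (hv : ‖v‖ < s) :
    mAdd s (-u) (mAdd s u v) = v := by
  simpa using mAdd_neg_cancel_left hs (u := -u) (by rwa [norm_neg]) hv

lemma mCoadd_mAdd (hs : 0 < s) {u y : V} (hu : ‖u‖ < s) (hy : ‖y‖ < s) :
    mCoadd s u (mAdd s u y) = mAdd s u (mAdd s y u) := by
  rw [mCoadd_eq_mAdd_mAdd, neg_mAdd_cancel_left hs hu hy]

lemma sq_add_norm_sq_add_inner_pos {u y : V} (hu : ‖u‖ < s) (hy : ‖y‖ < s) :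
    0 < s ^ 2 + ‖u‖ ^ 2 + 2 * ⟪u, y⟫ := by
  have := neg_le_of_abs_le (abs_real_inner_le_norm u y)
  nlinarith [sq_pos_of_pos (sub_pos.mpr hu), mul_nonneg (norm_nonneg u) (sub_pos.mpr hy).le]

lemma mAdd_mAdd_self_right (hs : 0 < s) {u y : V} (hu : ‖u‖ < s) (hy : ‖y‖ < s) :
    mAdd s u (mAdd s y u) =
      ((2 * s ^ 2 + 2 * ⟪u, y⟫) / (s ^ 2 + ‖u‖ ^ 2 + 2 * ⟪u, y⟫)) • u +
      ((s ^ 2 - ‖u‖ ^ 2) / (s ^ 2 + ‖u‖ ^ 2 + 2 * ⟪u, y⟫)) • y := by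
  have hΔ := mAdd_denom_pos hs hy hu
  have hnorm := sq_sub_norm_mAdd_sq hs hy hu
  have hw := mAdd_eq hs.ne' y u
  rw [real_inner_comm] at hΔ hnorm hw
  set w := mAdd s y u
  set Δ := s ^ 4 + 2 * ⟪u, y⟫ * s ^ 2 + ‖y‖ ^ 2 * ‖u‖ ^ 2 with hΔdef
  have hA := sq_add_norm_sq_add_inner_pos hu hy
  have hinner : ⟪u, w⟫ = (s ^ 2 * (s ^ 2 + 2 * ⟪u, y⟫ + ‖u‖ ^ 2) * ⟪u, y⟫ +
      s ^ 2 * (s ^ 2 - ‖y‖ ^ 2) * ‖u‖ ^ 2) / Δ := by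
    rw [hw, inner_add_right, real_inner_smul_right, real_inner_smul_right,
      real_inner_self_eq_norm_sq]
    field_simp
  have hw2 : ‖w‖ ^ 2 = s ^ 2 - s ^ 2 * (s ^ 2 - ‖y‖ ^ 2) * (s ^ 2 - ‖u‖ ^ 2) / Δ := by
    linarith
  have hΔ' : s ^ 4 + 2 * ⟪u, w⟫ * s ^ 2 + ‖u‖ ^ 2 * ‖w‖ ^ 2 =
      s ^ 4 * (s ^ 2 + ‖u‖ ^ 2 + 2 * ⟪u, y⟫) ^ 2 / Δ := by
    rw [hinner, hw2]
    field_simp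
    rw [hΔdef]
    ring
  rw [mAdd_eq hs.ne' u w, hΔ', hinner, hw2, hw]
  match_scalars <;> field_simp <;> ring

end MobiusAddition

lemma exists_add_smul_sub_of_linear_eq {E : Type*} [AddCommGroup E] [Module ℝ E] (u v : E)
    {a b c p q p₀ p₁ q₁ : ℝ} (ha : a ≠ 0) (hq₁ : q₁ ≠ 0) (h₀ : a * p₀ = c)
    (h₁ : a * p₁ + b * q₁ = c) (h : a * p + b * q = c) :
    ∃ r : ℝ, p • u + q • v = p₀ • u + r • (p₁ • u + q₁ • v - p₀ • u) := by
  have hp : q₁ * p = q₁ * p₀ + q * (p₁ - p₀) :=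
    mul_left_cancel₀ ha (by linear_combination q₁ * h - q * h₁ + (q - q₁) * h₀)
  refine ⟨q / q₁, ?_⟩
  match_scalars
  · field_simp
    linear_combination hp
  · field_simp

/-- The Euclidean line through `2 ⊙ u` cut out, in the frame `(u, v)`, by one linear equation
on the coordinates; when `u` and `v` are independent it is the line through `2 ⊙ u` and
`u ⊞ (u ⊕ v)`. -/
def supportingChord (s : ℝ) (u v : V) : Set V :=
  {x | ∃ p q : ℝ, x = p • u + q • v ∧ (s ^ 2 + ‖u‖ ^ 2) * p + 2 * ⟪u, v⟫ * q = 2 * s ^ 2}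

section SupportingChord

variable {s : ℝ}

lemma mCoadd_mAdd_smul_mem_supportingChord (hs : 0 < s) {u v : V} (hu : ‖u‖ < s) {k : ℝ}
    (hkv : ‖k • v‖ < s) : mCoadd s u (mAdd s u (k • v)) ∈ supportingChord s u v := by
  have hA := sq_add_norm_sq_add_inner_pos hu hkv
  rw [mCoadd_mAdd hs hu hkv, mAdd_mAdd_self_right hs hu hkv, smul_smul]
  rw [real_inner_smul_right] at hA ⊢
  refine ⟨_, _, rfl, ?_⟩
  set X := s ^ 2 + ‖u‖ ^ 2 + 2 * (k * ⟪u, v⟫) with hX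
  field_simp
  rw [hX]
  ring

lemma sMul_two_mAdd_mem_supportingChord (hs : 0 < s) {u v : V} (hu : ‖u‖ < s)
    (hv : ‖v‖ < s) : sMul s 2 (mAdd s u v) ∈ supportingChord s u v := by
  have hΔ := (mAdd_denom_pos hs hu hv).ne'
  have hnorm := sq_sub_norm_mAdd_sq hs hu hv
  rw [sMul_two_s18 hs (norm_mAdd_lt hs hu hv)]
  set N := ‖mAdd s u v‖ ^ 2
  set Δ := s ^ 4 + 2 * ⟪u, v⟫ * s ^ 2 + ‖u‖ ^ 2 * ‖v‖ ^ 2 with hΔdef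
  have hform : (s ^ 2 + ‖u‖ ^ 2) * (s ^ 2 * (s ^ 2 + 2 * ⟪u, v⟫ + ‖v‖ ^ 2) / Δ) +
      2 * ⟪u, v⟫ * (s ^ 2 * (s ^ 2 - ‖u‖ ^ 2) / Δ) = s ^ 2 + N := by
    rw [show N = s ^ 2 - (s ^ 2 - N) by ring, hnorm]
    field_simp
    rw [hΔdef]
    ring
  have hc : 2 * s ^ 2 / (s ^ 2 + N) * (s ^ 2 + N) = 2 * s ^ 2 :=
    div_mul_cancel₀ _ (by positivity)
  rw [mAdd_eq hs.ne', smul_add, smul_smul, smul_smul]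
  exact ⟨_, _, rfl, by linear_combination 2 * s ^ 2 / (s ^ 2 + N) * hform + hc⟩

lemma exists_eq_add_smul_of_mem_supportingChord (hs : 0 < s) {u v x : V} (hu : ‖u‖ < s)
    (hv : ‖v‖ < s) (hx : x ∈ supportingChord s u v) :
    ∃ r : ℝ, x = sMul s 2 u + r • (mCoadd s u (mAdd s u v) - sMul s 2 u) := by
  obtain ⟨p, q, rfl, hpq⟩ := hx
  have hA := sq_add_norm_sq_add_inner_pos hu hv
  have hu2 : 0 < s ^ 2 - ‖u‖ ^ 2 := by nlinarith [norm_nonneg u]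
  rw [mCoadd_mAdd hs hu hv, mAdd_mAdd_self_right hs hu hv, sMul_two_s18 hs hu]
  refine exists_add_smul_sub_of_linear_eq u v (by positivity) (by positivity) ?_ ?_ hpq
  · field_simp
  · field_simp
    ring

end SupportingChord

theorem mobius_supporting_chord_general (s : ℝ) (hs : 0 < s) (C D : V)
    (hC : ‖C‖ < s) (hD : ‖D‖ < s)
    (L : ℝ → V)
    (hL : ∀ t : ℝ, L t = mAdd s C (sMul s t (mAdd s (-C) D))) :
    mCoadd s C (L 0) = sMul s 2 C ∧
    mCoadd s C (L 1) = mCoadd s C D ∧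
    (∀ t : ℝ, ∃ lam : ℝ,
      mCoadd s C (L t) = sMul s 2 C + lam • (mCoadd s C D - sMul s 2 C)) ∧
    (∃ lam' : ℝ,
      sMul s 2 D = sMul s 2 C + lam' • (mCoadd s C D - sMul s 2 C)) := by
  set v := mAdd s (-C) D
  have hv : ‖v‖ < s := norm_mAdd_lt hs (by rwa [norm_neg]) hD
  have hCv : mAdd s C v = D := mAdd_neg_cancel_left hs hC hD
  have hchord : ∀ x ∈ supportingChord s C v,
      ∃ r : ℝ, x = sMul s 2 C + r • (mCoadd s C D - sMul s 2 C) := fun x hx => by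
    simpa only [hCv] using exists_eq_add_smul_of_mem_supportingChord hs hC hv hx
  refine ⟨?_, ?_, fun t => ?_, hchord _ (hCv ▸ sMul_two_mAdd_mem_supportingChord hs hC hv)⟩
  · rw [hL, sMul_zero_left, mCoadd_mAdd hs hC (by simpa using hs), mAdd_mAdd_self_right hs hC
      (by simpa using hs), sMul_two_s18 hs hC]
    simp only [inner_zero_right, mul_zero, add_zero, smul_zero]
  · rw [hL, sMul_one hs hv, hCv]
  · obtain ⟨k, hk⟩ := exists_sMul_eq_smul s t v
    rw [hL, hk]
    exact hchord _ (mCoadd_mAdd_smul_mem_supportingChord hs hC (hk ▸ norm_sMul_lt hs t v))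

theorem mobius_supporting_chord (s : ℝ) (hs : 0 < s) (C D : V)
    (hC : ‖C‖ < s) (hD : ‖D‖ < s) (hCD : C ≠ D)
    (L : ℝ → V)
    (hL : ∀ t : ℝ, L t = mAdd s C (sMul s t (mAdd s (-C) D))) :
    mCoadd s C (L 0) = sMul s 2 C ∧
    mCoadd s C (L 1) = mCoadd s C D ∧
    (∀ t : ℝ, ∃ lam : ℝ,
      mCoadd s C (L t) = sMul s 2 C + lam • (mCoadd s C D - sMul s 2 C)) ∧
    (∃ lam' : ℝ,
      sMul s 2 D = sMul s 2 C + lam' • (mCoadd s C D - sMul s 2 C)) :=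
  mobius_supporting_chord_general s hs C D hC hD L hL
end
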